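/- The normalized first and second complete elliptic integrals, viewed as functions of the nome, transform under Γ₀(4) as follows. Set K̂(τ) = θ₃(τ)², 𝒦ℰ(τ) = (θ₂⁴)′/θ₂⁴ (the product K̂·Ê), and Ê(τ) = 𝒦ℰ(τ)/K̂(τ). Then for every matrix (a b; c d) in SL₂(ℤ) with c ≡ 0 (mod 4) and every τ in the upper half-plane, with τ₁ = (aτ+b)/(cτ+d): K̂(τ₁) = χ₋₄(d)·(cτ+d)·K̂(τ); Ê(τ₁) = χ₋₄(d)·[(cτ+d)·Ê(τ) + c/(πi·K̂(τ))]; and 𝒦ℰ(τ₁) = (cτ+d)²·𝒦ℰ(τ) + c(cτ+d)/(πi). -/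

import Mathlib

/-!
Write `θ₂ = jacobiThetaTwo`, `θ₃ = jacobiTheta`, `θ₄ = jacobiThetaFour` for the classical
theta-nulls in the nome `e^{πiz}`, so that `K̂(τ) = θ₃(2τ)²` and `theta2 τ = θ₂(2τ)`. Jacobi's
inversion formula exchanges `θ₃ ↔ θ₃` and `θ₂ ↔ θ₄` under `z ↦ -1/z` (with a factor `√(-iz)`),
and `θ₃`, `θ₄` are `2`-periodic; since `z / (2nz + 1) = S T^{-2n} S z`, this gives the weight `1`
law of `K̂` and the weight `2` law of `theta2⁴` under `V^n = (1 0; 4n 1)`. Both are also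
`1`-periodic, and `Γ₀(4)` is generated by `±1`, `T` and `V` (a Euclidean descent on `|c|`), which
gives the laws on all of `Γ₀(4)`.

`K̂Ê` is `(2πi)⁻¹` times the logarithmic derivative of `theta2⁴`; differentiating the weight `2`
law produces the extra term `2c(cτ + d)`. This needs `θ₂ ≠ 0`, which follows because the zero set
of `θ₂θ₃θ₄` is `SL(2, ℤ)`-invariant while on the fundamental domain (`e^{-π Im z} < 1/3`) each
factor is close to its leading term. Finally `Ê = K̂Ê / K̂` and `χ₋₄(d)² = 1`.
-/

open Complex

noncomputable section

/-- The Jacobi theta-null θ₂. -/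
def theta2 (τ : ℂ) : ℂ :=
  ∑' m : ℤ, Complex.exp (2 * Real.pi * Complex.I * τ * ((m : ℂ) + 1 / 2) ^ 2)

/-- The Jacobi theta-null θ₃. -/
def theta3 (τ : ℂ) : ℂ :=
  ∑' m : ℤ, Complex.exp (2 * Real.pi * Complex.I * τ * (m : ℂ) ^ 2)

/-- The derivation f ↦ f′ = (2πi)⁻¹ df/dτ = q d/dq. -/
def dq (f : ℂ → ℂ) : ℂ → ℂ := fun τ => (2 * Real.pi * Complex.I)⁻¹ * deriv f τ

/-- The normalized first complete elliptic integral as a function of the nome: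
K̂ = θ₃². -/
def Khat (τ : ℂ) : ℂ := theta3 τ ^ 2

/-- The product K̂·Ê, equal to (θ₂⁴)′/θ₂⁴. -/
def KEhat (τ : ℂ) : ℂ := dq (fun t => theta2 t ^ 4) τ / theta2 τ ^ 4

/-- The normalized second complete elliptic integral as a function of the nome:
Ê = (K̂·Ê)/K̂. -/
def Ehat (τ : ℂ) : ℂ := KEhat τ / Khat τ

/-- The quadratic character χ₋₄. -/
def chiNeg4 (d : ℤ) : ℂ := if d % 4 = 1 then 1 else if d % 4 = 3 then -1 else 0

open Filter Topology Real
open scoped UpperHalfPlane MatrixGroups Modular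
open ModularGroup

lemma int_mul_add_ne_zero {a b c d : ℤ} (hdet : a * d - b * c = 1) {τ : ℂ} (hτ : 0 < τ.im) :
    (c : ℂ) * τ + d ≠ 0 := by
  intro h
  have hc : (c : ℝ) * τ.im = 0 := by simpa using congrArg im h
  obtain rfl : c = 0 := by exact_mod_cast (mul_eq_zero.mp hc).resolve_right hτ.ne'
  obtain rfl : d = 0 := by simpa using h
  simp at hdet

lemma im_int_moebius (a b c d : ℤ) (τ : ℂ) :
    (((a : ℂ) * τ + b) / ((c : ℂ) * τ + d)).im = (a * d - b * c) * τ.im / normSq (c * τ + d) := by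
  simp only [div_im, add_re, add_im, mul_re, mul_im, intCast_re, intCast_im]
  ring

lemma im_int_moebius_pos {a b c d : ℤ} (hdet : a * d - b * c = 1) {τ : ℂ} (hτ : 0 < τ.im) :
    0 < (((a : ℂ) * τ + b) / ((c : ℂ) * τ + d)).im := by
  rw [im_int_moebius, ← Int.cast_mul, ← Int.cast_mul, ← Int.cast_sub, hdet, Int.cast_one, one_mul]
  exact div_pos hτ (normSq_pos.mpr (int_mul_add_ne_zero hdet hτ))

lemma hasDerivAt_int_moebius {a b c d : ℤ} (hdet : a * d - b * c = 1) {τ : ℂ} (hτ : 0 < τ.im) :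
    HasDerivAt (fun t : ℂ => ((a : ℂ) * t + b) / ((c : ℂ) * t + d))
      (1 / ((c : ℂ) * τ + d) ^ 2) τ := by
  have hdet' : (a : ℂ) * d - b * c = 1 := by exact_mod_cast hdet
  refine ((((hasDerivAt_id' τ).const_mul (a : ℂ)).add_const (b : ℂ)).div
    (((hasDerivAt_id' τ).const_mul (c : ℂ)).add_const (d : ℂ))
    (int_mul_add_ne_zero hdet hτ)).congr_deriv ?_
  linear_combination hdet' / ((c : ℂ) * τ + d) ^ 2

lemma four_mul_add_one_ne_zero (n : ℤ) {τ : ℂ} (hτ : 0 < τ.im) : 4 * n * τ + 1 ≠ 0 := by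
  exact_mod_cast int_mul_add_ne_zero (a := 1) (b := 0) (c := 4 * n) (d := 1) (by ring) hτ

lemma odd_of_mul_sub_mul_eq_one {a b c d : ℤ} (h : a * d - b * c = 1) (hc : 2 ∣ c) : Odd d := by
  obtain ⟨k, rfl⟩ := hc
  exact (Int.odd_mul.mp (⟨b * k, by linear_combination h⟩ : Odd (a * d))).2

lemma exists_two_mul_abs_mul_add_le (c d : ℤ) (hc : c ≠ 0) : ∃ n : ℤ, 2 * |c * n + d| ≤ |c| := by
  have hdiv := Int.emod_add_mul_ediv d c
  have h0 := Int.emod_nonneg d hc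
  have h1 := Int.emod_lt d hc
  rw [Int.natCast_natAbs] at h1
  by_cases h : 2 * (d % c) ≤ |c|
  · refine ⟨-(d / c), ?_⟩
    rwa [show c * -(d / c) + d = d % c by linarith, abs_of_nonneg h0]
  · refine ⟨-(d / c) - c.sign, ?_⟩
    rw [show c * (-(d / c) - c.sign) + d = d % c - |c| by
        rw [mul_sub, Int.mul_sign_self, Int.natCast_natAbs]; linarith,
      abs_of_neg (by linarith)]
    linarith

theorem gamma0_four_induction {P : ℤ → ℤ → ℤ → ℤ → Prop}
    (one : P 1 0 0 1) (neg_one : P (-1) 0 0 (-1))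
    (mul_T : ∀ a b c d, 4 ∣ c → P a b c d → ∀ n : ℤ, P a (a * n + b) c (c * n + d))
    (mul_V : ∀ a b c d, a * d - b * c = 1 → P a b c d →
      ∀ n : ℤ, P (a + 4 * n * b) b (c + 4 * n * d) d)
    {a b c d : ℤ} (hdet : a * d - b * c = 1) (hc : 4 ∣ c) : P a b c d := by
  induction hN : c.natAbs using Nat.strong_induction_on generalizing a b c d with
  | _ N ih =>
  subst hN
  rcases eq_or_ne c 0 with rfl | hc0
  · rcases Int.eq_one_or_neg_one_of_mul_eq_one' (by simpa using hdet : a * d = 1) with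
      ⟨rfl, rfl⟩ | ⟨rfl, rfl⟩
    · simpa using mul_T 1 0 0 1 (dvd_zero 4) one b
    · simpa using mul_T (-1) 0 0 (-1) (dvd_zero 4) neg_one (-b)
  -- `T ^ n` gives `2 |d'| ≤ |c|`, then `V ^ m` gives `|c''| ≤ 2 |d'|`, and `2 |d'| ≠ |c|` because
  -- `d'` is odd while `4 ∣ c`
  obtain ⟨n, hn⟩ := exists_two_mul_abs_mul_add_le c d hc0
  set d' := c * n + d
  set b' := a * n + b
  have hdet' : a * d' - b' * c = 1 := by linear_combination hdet
  have hd'_odd : Odd d' := odd_of_mul_sub_mul_eq_one hdet' (dvd_trans (by norm_num) hc)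
  have hd'0 : d' ≠ 0 := by rintro h; rw [h] at hd'_odd; exact Int.not_odd_zero hd'_odd
  obtain ⟨m, hm⟩ := exists_two_mul_abs_mul_add_le (4 * d') c (mul_ne_zero four_ne_zero hd'0)
  have hlt : (4 * d' * m + c).natAbs < c.natAbs := by
    rw [Int.odd_iff] at hd'_odd
    simp only [Int.abs_eq_natAbs] at hn hm
    omega
  have hP : P (a + 4 * m * b') b' (4 * d' * m + c) d' :=
    ih _ hlt (by linear_combination hdet')
      (dvd_add (dvd_mul_of_dvd_left (dvd_mul_right 4 d') m) hc) rfl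
  have hPV : P a b' c d' := by
    convert mul_V _ _ _ _ (by linear_combination hdet') hP (-m) using 2 <;> ring
  convert mul_T _ _ _ _ hc hPV (-n) using 2 <;> ring

def TransformsUnder (f : ℂ → ℂ) (k : ℕ) (ψ : ℤ → ℂ) (a b c d : ℤ) : Prop :=
  ∀ τ : ℂ, 0 < τ.im →
    f (((a : ℂ) * τ + b) / ((c : ℂ) * τ + d)) = ψ d * ((c : ℂ) * τ + d) ^ k * f τ

lemma TransformsUnder.mul_T {f : ℂ → ℂ} {k : ℕ} {ψ : ℤ → ℂ} (hper : Function.Periodic f 1)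
    (hψ : ∀ m d : ℤ, ψ (4 * m + d) = ψ d) {a b c d : ℤ} (hc : 4 ∣ c)
    (h : TransformsUnder f k ψ a b c d) (n : ℤ) :
    TransformsUnder f k ψ a (a * n + b) c (c * n + d) := by
  intro τ hτ
  have hψ' : ψ (c * n + d) = ψ d := by
    obtain ⟨m, rfl⟩ := hc
    rw [mul_assoc, hψ]
  have hf : f (τ + n) = f τ := by simpa using hper.int_mul n τ
  rw [show ((a : ℂ) * τ + (a * n + b : ℤ)) / ((c : ℂ) * τ + (c * n + d : ℤ)) =
    (a * (τ + n) + b) / (c * (τ + n) + d) by push_cast; ring_nf,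
    h (τ + n) (by simpa using hτ), hf, hψ']
  push_cast
  ring

lemma TransformsUnder.mul_V {f : ℂ → ℂ} {k : ℕ} {ψ : ℤ → ℂ}
    (hV : ∀ n : ℤ, ∀ τ : ℂ, 0 < τ.im → f (τ / (4 * n * τ + 1)) = (4 * n * τ + 1) ^ k * f τ)
    {a b c d : ℤ} (hdet : a * d - b * c = 1) (h : TransformsUnder f k ψ a b c d) (n : ℤ) :
    TransformsUnder f k ψ (a + 4 * n * b) b (c + 4 * n * d) d := by
  intro τ hτ
  have hτ' : 0 < (τ / (4 * n * τ + 1)).im := by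
    simpa using im_int_moebius_pos (a := 1) (b := 0) (c := 4 * n) (d := 1) (by ring) hτ
  have h4 := four_mul_add_one_ne_zero n hτ
  have hden := int_mul_add_ne_zero hdet hτ'
  have hden' := int_mul_add_ne_zero (a := a + 4 * n * b) (b := b) (c := c + 4 * n * d) (d := d)
    (by linear_combination hdet) hτ
  have hcross : ((c : ℂ) * (τ / (4 * n * τ + 1)) + d) * (4 * n * τ + 1) =
      (c + 4 * n * d : ℤ) * τ + d := by
    rw [add_mul, mul_assoc, div_mul_cancel₀ _ h4]
    push_cast
    ring
  rw [show (((a + 4 * n * b : ℤ) : ℂ) * τ + b) / (((c + 4 * n * d : ℤ) : ℂ) * τ + d) =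
    (a * (τ / (4 * n * τ + 1)) + b) / (c * (τ / (4 * n * τ + 1)) + d) by
      rw [div_eq_div_iff hden' hden, ← hcross]; push_cast; field_simp; ring,
    h _ hτ', hV n τ hτ, ← hcross, mul_pow]
  ring

theorem transformsUnder_of_gamma0_four {f : ℂ → ℂ} {k : ℕ} {ψ : ℤ → ℂ}
    (hper : Function.Periodic f 1)
    (hV : ∀ n : ℤ, ∀ τ : ℂ, 0 < τ.im → f (τ / (4 * n * τ + 1)) = (4 * n * τ + 1) ^ k * f τ)
    (hψ : ∀ m d : ℤ, ψ (4 * m + d) = ψ d) (hψ_one : ψ 1 = 1) (hψ_neg_one : ψ (-1) = (-1) ^ k)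
    {a b c d : ℤ} (hdet : a * d - b * c = 1) (hc : 4 ∣ c) : TransformsUnder f k ψ a b c d :=
  gamma0_four_induction (P := TransformsUnder f k ψ) (fun τ _ => by simp [hψ_one])
    (fun τ _ => by simp [hψ_neg_one, ← mul_pow]) (fun _ _ _ _ hc h => h.mul_T hper hψ hc)
    (fun _ _ _ _ hdet h => h.mul_V hV hdet) hdet hc

theorem TransformsUnder.logDeriv_eq {f : ℂ → ℂ} {k : ℕ} {ψ : ℤ → ℂ} {a b c d : ℤ}
    (h : TransformsUnder f k ψ a b c d) (hdet : a * d - b * c = 1) (hψ : ψ d ≠ 0) {τ : ℂ}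
    (hτ : 0 < τ.im) (hfτ : f τ ≠ 0) (hf : DifferentiableAt ℂ f τ)
    (hf' : DifferentiableAt ℂ f (((a : ℂ) * τ + b) / ((c : ℂ) * τ + d))) :
    logDeriv f (((a : ℂ) * τ + b) / ((c : ℂ) * τ + d)) =
      ((c : ℂ) * τ + d) ^ 2 * logDeriv f τ + k * c * ((c : ℂ) * τ + d) := by
  have hD := int_mul_add_ne_zero hdet hτ
  have hg := hasDerivAt_int_moebius hdet hτ
  have hloc : (f ∘ fun t => ((a : ℂ) * t + b) / ((c : ℂ) * t + d)) =ᶠ[𝓝 τ]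
      fun t => ψ d * (((c : ℂ) * t + d) ^ k * f t) :=
    eventually_of_mem ((isOpen_lt continuous_const continuous_im).mem_nhds hτ)
      fun t ht => (h t ht).trans (mul_assoc _ _ _)
  have key := logDeriv_comp (g := fun t : ℂ => ((a : ℂ) * t + b) / ((c : ℂ) * t + d)) hf'
    hg.differentiableAt
  rw [(logDeriv_congr_nhds hloc).eq_of_nhds, logDeriv_const_mul _ _ hψ,
    logDeriv_mul (f := fun t => ((c : ℂ) * t + d) ^ k) τ (pow_ne_zero _ hD) hfτ (by fun_prop) hf,
    logDeriv_fun_pow (by fun_prop), hg.deriv, logDeriv_apply, deriv_add_const,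
    deriv_const_mul _ differentiableAt_id, deriv_id''] at key
  generalize logDeriv f (((a : ℂ) * τ + b) / ((c : ℂ) * τ + d)) = L at key ⊢
  field_simp at key
  linear_combination -key

def jacobiThetaTwo (z : ℂ) : ℂ := cexp (π * I * z / 4) * jacobiTheta₂ (z / 2) z

def jacobiThetaFour (z : ℂ) : ℂ := jacobiTheta₂ (1 / 2) z

lemma theta3_eq_jacobiTheta (τ : ℂ) : theta3 τ = jacobiTheta (2 * τ) :=
  tsum_congr fun m => by ring_nf

lemma theta2_eq_jacobiThetaTwo (τ : ℂ) : theta2 τ = jacobiThetaTwo (2 * τ) := by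
  rw [theta2, jacobiThetaTwo, jacobiTheta₂, ← tsum_mul_left]
  refine tsum_congr fun m => ?_
  rw [jacobiTheta₂_term, ← Complex.exp_add]
  ring_nf

lemma jacobiTheta₂_add_one_right (w z : ℂ) :
    jacobiTheta₂ w (z + 1) = jacobiTheta₂ (w + 1 / 2) z := by
  refine tsum_congr fun n => ?_
  obtain ⟨k, hk⟩ := Int.even_mul_pred_self n
  have hk' : (n : ℂ) * (n - 1) = k + k := by exact_mod_cast hk
  rw [jacobiTheta₂_term, jacobiTheta₂_term, show 2 * π * I * n * w + π * I * n ^ 2 * (z + 1) =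
      2 * π * I * n * (w + 1 / 2) + π * I * n ^ 2 * z + k * (2 * π * I) by
      linear_combination π * I * hk',
    Complex.exp_add, exp_int_mul_two_pi_mul_I, mul_one]

lemma jacobiTheta_add_one (z : ℂ) : jacobiTheta (z + 1) = jacobiThetaFour z := by
  rw [jacobiTheta_eq_jacobiTheta₂, jacobiTheta₂_add_one_right, zero_add, jacobiThetaFour]

lemma jacobiThetaFour_add_one (z : ℂ) : jacobiThetaFour (z + 1) = jacobiTheta z := by
  rw [jacobiThetaFour, jacobiTheta₂_add_one_right, add_halves, ← zero_add 1, jacobiTheta₂_add_left,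
    jacobiTheta_eq_jacobiTheta₂]

lemma jacobiThetaTwo_add_one (z : ℂ) :
    jacobiThetaTwo (z + 1) = cexp (π * I / 4) * jacobiThetaTwo z := by
  rw [jacobiThetaTwo, jacobiThetaTwo, jacobiTheta₂_add_one_right, add_div, add_assoc, add_halves,
    jacobiTheta₂_add_left, ← mul_assoc, ← Complex.exp_add]
  ring_nf

lemma jacobiThetaTwo_pow_four_periodic : Function.Periodic (jacobiThetaTwo · ^ 4) 2 := fun z => by
  dsimp only
  rw [show z + 2 = z + 1 + 1 by ring, jacobiThetaTwo_add_one, jacobiThetaTwo_add_one, ← mul_assoc,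
    mul_pow, ← Complex.exp_add, ← Complex.exp_nat_mul,
    show ((4 : ℕ) : ℂ) * (π * I / 4 + π * I / 4) = 2 * π * I by push_cast; ring,
    Complex.exp_two_pi_mul_I, one_mul]

lemma neg_I_mul_cpow_half_ne_zero {z : ℂ} (hz : z ≠ 0) : (-I * z) ^ (1 / 2 : ℂ) ≠ 0 := by
  rw [Ne, cpow_eq_zero_iff, not_and_or]
  exact Or.inl (mul_ne_zero (neg_ne_zero.mpr I_ne_zero) hz)

lemma cpow_half_sq (x : ℂ) : (x ^ (1 / 2 : ℂ)) ^ 2 = x := by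
  rw [one_div]
  exact cpow_ofNat_inv_pow x 2

lemma jacobiTheta_neg_one_div {z : ℂ} (hz : z ≠ 0) :
    jacobiTheta (-1 / z) = (-I * z) ^ (1 / 2 : ℂ) * jacobiTheta z := by
  rw [jacobiTheta_eq_jacobiTheta₂, jacobiTheta_eq_jacobiTheta₂,
    jacobiTheta₂_functional_equation 0 z]
  field_simp [neg_I_mul_cpow_half_ne_zero hz]
  simp

lemma jacobiThetaTwo_neg_one_div {z : ℂ} (hz : z ≠ 0) :
    jacobiThetaTwo (-1 / z) = (-I * z) ^ (1 / 2 : ℂ) * jacobiThetaFour z := by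
  rw [jacobiThetaTwo, jacobiThetaFour, jacobiTheta₂_functional_equation (1 / 2) z,
    ← jacobiTheta₂_neg_left]
  field_simp [neg_I_mul_cpow_half_ne_zero hz]
  ring_nf

lemma jacobiThetaFour_neg_one_div {z : ℂ} (hz : z ≠ 0) :
    jacobiThetaFour (-1 / z) = (-I * z) ^ (1 / 2 : ℂ) * jacobiThetaTwo z := by
  rw [jacobiThetaTwo, jacobiThetaFour, jacobiTheta₂_functional_equation (z / 2) z]
  field_simp [neg_I_mul_cpow_half_ne_zero hz]
  rw [mul_assoc, ← Complex.exp_add, add_neg_eq_zero.mpr (by ring), Complex.exp_zero, mul_one]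

lemma norm_tsum_sub_one_le {f : ℕ → ℂ} {r : ℝ} (hr0 : 0 ≤ r) (hr1 : r < 1) (h0 : f 0 = 1)
    (hf : ∀ n, ‖f (n + 1)‖ ≤ r ^ (n + 1)) : ‖∑' n, f n - 1‖ ≤ r / (1 - r) := by
  have hg : HasSum (fun n : ℕ => r ^ (n + 1)) (r / (1 - r)) := by
    simpa [pow_succ', div_eq_mul_inv] using (hasSum_geometric_of_lt_one hr0 hr1).mul_left r
  have hs : Summable f := (summable_nat_add_iff 1).mp (hg.summable.of_norm_bounded hf)
  rw [hs.tsum_eq_zero_add, h0, add_sub_cancel_left]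
  exact tsum_of_norm_bounded hg hf

lemma jacobiTheta₂_term_neg_add_one_half_self (n : ℤ) (z : ℂ) :
    jacobiTheta₂_term (-(n + 1)) (z / 2) z = jacobiTheta₂_term n (z / 2) z := by
  simp only [jacobiTheta₂_term]
  congr 1
  push_cast
  ring

lemma jacobiTheta₂_half_self {z : ℂ} (hz : 0 < z.im) :
    jacobiTheta₂ (z / 2) z = 2 * ∑' n : ℕ, jacobiTheta₂_term n (z / 2) z := by
  have hs := hasSum_jacobiTheta₂_term (z / 2) hz
  have hnat : Summable fun n : ℕ => jacobiTheta₂_term n (z / 2) z :=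
    hs.summable.comp_injective Nat.cast_injective
  rw [hs.unique (hnat.hasSum.of_nat_of_neg_add_one (by
    simpa only [jacobiTheta₂_term_neg_add_one_half_self] using hnat.hasSum)), two_mul]

lemma norm_jacobiTheta₂_term_half_self_le {z : ℂ} (hz : 0 < z.im) (n : ℕ) :
    ‖jacobiTheta₂_term n (z / 2) z‖ ≤ rexp (-π * z.im) ^ n := by
  rw [norm_jacobiTheta₂_term, ← Real.exp_nat_mul, Real.exp_le_exp, div_ofNat_im]
  push_cast
  nlinarith [show 0 ≤ π * z.im * (n : ℝ) ^ 2 by positivity]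

lemma jacobiTheta_ne_zero_of_exp_lt {z : ℂ} (hz : 0 < z.im) (hr : rexp (-π * z.im) < 1 / 3) :
    jacobiTheta z ≠ 0 := by
  intro h
  have := norm_jacobiTheta_sub_one_le hz
  rw [h, zero_sub, norm_neg, norm_one, div_mul_eq_mul_div, le_div_iff₀ (by linarith)] at this
  linarith

lemma jacobiThetaTwo_ne_zero_of_exp_lt {z : ℂ} (hz : 0 < z.im) (hr : rexp (-π * z.im) < 1 / 3) :
    jacobiThetaTwo z ≠ 0 := by
  rw [jacobiThetaTwo, jacobiTheta₂_half_self hz]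
  refine mul_ne_zero (Complex.exp_ne_zero _) (mul_ne_zero two_ne_zero fun h => ?_)
  have := norm_tsum_sub_one_le (f := fun n : ℕ => jacobiTheta₂_term n (z / 2) z) (exp_pos _).le
    (by linarith) (by simp [jacobiTheta₂_term])
    fun n => by exact_mod_cast norm_jacobiTheta₂_term_half_self_le hz (n + 1)
  rw [h, zero_sub, norm_neg, norm_one, le_div_iff₀ (by linarith)] at this
  linarith

def jacobiThetaProd (z : ℂ) : ℂ := jacobiThetaTwo z * jacobiTheta z * jacobiThetaFour z

lemma jacobiThetaProd_add_one (z : ℂ) :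
    jacobiThetaProd (z + 1) = cexp (π * I / 4) * jacobiThetaProd z := by
  simp only [jacobiThetaProd, jacobiThetaTwo_add_one, jacobiTheta_add_one, jacobiThetaFour_add_one]
  ring

lemma jacobiThetaProd_neg_one_div {z : ℂ} (hz : z ≠ 0) :
    jacobiThetaProd (-1 / z) = ((-I * z) ^ (1 / 2 : ℂ)) ^ 3 * jacobiThetaProd z := by
  simp only [jacobiThetaProd, jacobiThetaTwo_neg_one_div hz, jacobiTheta_neg_one_div hz,
    jacobiThetaFour_neg_one_div hz]
  ring

lemma jacobiThetaProd_smul_eq_zero_iff (g : SL(2, ℤ)) (z : ℍ) :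
    jacobiThetaProd ↑(g • z) = 0 ↔ jacobiThetaProd z = 0 := by
  revert z
  refine Subgroup.closure_induction
    (p := fun g _ => ∀ z : ℍ, jacobiThetaProd ↑(g • z) = 0 ↔ jacobiThetaProd z = 0)
    ?_ ?_ ?_ ?_ (SpecialLinearGroup.SL2Z_generators ▸ Subgroup.mem_top g)
  · rintro _ (rfl | rfl) z
    · rw [UpperHalfPlane.modular_S_smul, UpperHalfPlane.coe_mk, show (-(z : ℂ))⁻¹ = -1 / z by ring,
        jacobiThetaProd_neg_one_div z.ne_zero,
        mul_eq_zero, or_iff_right (pow_ne_zero 3 (neg_I_mul_cpow_half_ne_zero z.ne_zero))]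
    · rw [UpperHalfPlane.modular_T_smul, UpperHalfPlane.coe_vadd, ofReal_one, add_comm,
        jacobiThetaProd_add_one, mul_eq_zero, or_iff_right (Complex.exp_ne_zero _)]
  · simp
  · intro g h _ _ hg hh z
    rw [mul_smul, hg, hh]
  · intro g _ hg z
    rw [← hg, smul_inv_smul]

lemma exp_neg_pi_mul_im_lt_of_mem_fd {z : ℍ} (hz : z ∈ 𝒟) : rexp (-π * z.im) < 1 / 3 := by
  have h3 := three_le_four_mul_im_sq_of_mem_fd hz
  have hy : 2 / 3 < z.im := by nlinarith [z.im_pos]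
  have hπ : 2 < π * z.im := by nlinarith [pi_gt_three]
  have := add_one_le_exp (π * z.im)
  rw [neg_mul, Real.exp_neg, inv_lt_comm₀ (exp_pos _) (by norm_num)]
  linarith

lemma jacobiThetaProd_ne_zero (z : ℍ) : jacobiThetaProd z ≠ 0 := by
  obtain ⟨g, hg⟩ := exists_smul_mem_fd z
  have hr := exp_neg_pi_mul_im_lt_of_mem_fd hg
  have him : 0 < ((g • z : ℍ) : ℂ).im := (g • z).im_pos
  have him' : ((g • z : ℍ) + 1 : ℂ).im = ((g • z : ℍ) : ℂ).im := by simp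
  rw [Ne, ← jacobiThetaProd_smul_eq_zero_iff g, jacobiThetaProd, ← jacobiTheta_add_one]
  exact mul_ne_zero (mul_ne_zero (jacobiThetaTwo_ne_zero_of_exp_lt him hr)
    (jacobiTheta_ne_zero_of_exp_lt him hr))
    (jacobiTheta_ne_zero_of_exp_lt (him' ▸ him) (him' ▸ hr))

lemma theta2_ne_zero {τ : ℂ} (hτ : 0 < τ.im) : theta2 τ ≠ 0 := by
  have := jacobiThetaProd_ne_zero ⟨2 * τ, by simpa using hτ⟩
  rw [theta2_eq_jacobiThetaTwo]
  exact left_ne_zero_of_mul (left_ne_zero_of_mul this)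

lemma Khat_ne_zero {τ : ℂ} (hτ : 0 < τ.im) : Khat τ ≠ 0 := by
  have := jacobiThetaProd_ne_zero ⟨2 * τ, by simpa using hτ⟩
  rw [Khat, theta3_eq_jacobiTheta]
  exact pow_ne_zero 2 (right_ne_zero_of_mul (left_ne_zero_of_mul this))

lemma differentiableAt_theta2 {τ : ℂ} (hτ : 0 < τ.im) : DifferentiableAt ℂ theta2 τ := by
  have h2τ : 0 < (2 * τ).im := by simpa using hτ
  have hθ : DifferentiableAt ℂ (fun z : ℂ => jacobiTheta₂ (z / 2) z) (2 * τ) :=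
    (hasFDerivAt_jacobiTheta₂ (2 * τ / 2) h2τ).differentiableAt.comp
      (f := fun z : ℂ => (z / 2, z)) (2 * τ) (by fun_prop)
  rw [show theta2 = fun τ => jacobiThetaTwo (2 * τ) from funext theta2_eq_jacobiThetaTwo]
  exact (((by fun_prop : DifferentiableAt ℂ (fun z => cexp (π * I * z / 4)) (2 * τ)).mul hθ).comp τ
    (by fun_prop) : _)

lemma apply_div_two_mul_add_one {F G : ℂ → ℂ} {k : ℕ}
    (hF : ∀ z ≠ 0, F (-1 / z) = (-I * z) ^ k * G z)
    (hG : ∀ z ≠ 0, G (-1 / z) = (-I * z) ^ k * F z)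
    (hper : Function.Periodic G 2) (n : ℤ) {z : ℂ} (hz : z ≠ 0) (hn : 2 * n * z + 1 ≠ 0) :
    F (z / (2 * n * z + 1)) = (2 * n * z + 1) ^ k * F z := by
  have hu : -1 / z + (-n : ℤ) * 2 = -(2 * n * z + 1) / z := by
    push_cast
    field_simp
    ring
  have hu0 : -1 / z + (-n : ℤ) * 2 ≠ 0 := hu ▸ div_ne_zero (neg_ne_zero.mpr hn) hz
  have hzu : z / (2 * n * z + 1) = -1 / (-1 / z + (-n : ℤ) * 2) := by
    rw [hu, neg_div, neg_div, one_div_neg_eq_neg_one_div, neg_neg, one_div_div]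
  rw [hzu, hF _ hu0, hper.int_mul (-n) (-1 / z), hG z hz, ← mul_assoc, ← mul_pow, hu]
  congr 2
  field_simp
  ring_nf
  rw [I_sq]
  ring

lemma Khat_periodic : Function.Periodic Khat 1 := fun τ => by
  rw [Khat, Khat, theta3_eq_jacobiTheta, theta3_eq_jacobiTheta, mul_add, mul_one, add_comm,
    jacobiTheta_two_add]

lemma Khat_div_four_mul_add_one (n : ℤ) {τ : ℂ} (hτ : 0 < τ.im) :
    Khat (τ / (4 * n * τ + 1)) = (4 * n * τ + 1) ^ 1 * Khat τ := by
  have hS : ∀ z ≠ 0, jacobiTheta (-1 / z) ^ 2 = (-I * z) ^ 1 * jacobiTheta z ^ 2 := fun z hz => by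
    rw [jacobiTheta_neg_one_div hz, mul_pow, cpow_half_sq, pow_one]
  have h := apply_div_two_mul_add_one (F := (jacobiTheta · ^ 2)) hS hS
    (fun z => by simp only [add_comm z, jacobiTheta_two_add]) n (z := 2 * τ)
    (mul_ne_zero two_ne_zero fun h => by simp [h] at hτ)
    (by convert four_mul_add_one_ne_zero n hτ using 1; ring)
  simp only [Khat, theta3_eq_jacobiTheta]
  convert h using 3 <;> ring

lemma theta2_pow_four_periodic : Function.Periodic (theta2 · ^ 4) 1 := fun τ => by
  simp only [theta2_eq_jacobiThetaTwo, mul_add, mul_one]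
  exact jacobiThetaTwo_pow_four_periodic _

lemma theta2_pow_four_div_four_mul_add_one (n : ℤ) {τ : ℂ} (hτ : 0 < τ.im) :
    theta2 (τ / (4 * n * τ + 1)) ^ 4 = (4 * n * τ + 1) ^ 2 * theta2 τ ^ 4 := by
  have hpow : ∀ z : ℂ, ((-I * z) ^ (1 / 2 : ℂ)) ^ 4 = (-I * z) ^ 2 := fun z => by
    rw [show 4 = 2 * 2 by rfl, pow_mul, cpow_half_sq]
  have h := apply_div_two_mul_add_one (F := (jacobiThetaTwo · ^ 4)) (G := (jacobiThetaFour · ^ 4))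
    (fun z hz => by rw [jacobiThetaTwo_neg_one_div hz, mul_pow, hpow])
    (fun z hz => by rw [jacobiThetaFour_neg_one_div hz, mul_pow, hpow])
    (fun z => by simp only [jacobiThetaFour, jacobiTheta₂_add_right]) n (z := 2 * τ)
    (mul_ne_zero two_ne_zero fun h => by simp [h] at hτ)
    (by convert four_mul_add_one_ne_zero n hτ using 1; ring)
  simp only [theta2_eq_jacobiThetaTwo]
  convert h using 3 <;> ring

lemma chiNeg4_four_mul_add (m d : ℤ) : chiNeg4 (4 * m + d) = chiNeg4 d := by
  rw [chiNeg4, chiNeg4, show (4 * m + d) % 4 = d % 4 by omega]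

lemma chiNeg4_sq_of_odd {d : ℤ} (hd : Odd d) : chiNeg4 d ^ 2 = 1 := by
  obtain ⟨k, rfl⟩ := hd
  rcases (by omega : (2 * k + 1) % 4 = 1 ∨ (2 * k + 1) % 4 = 3) with h | h <;> simp [chiNeg4, h]

lemma Khat_transformsUnder {a b c d : ℤ} (hdet : a * d - b * c = 1) (hc : 4 ∣ c) :
    TransformsUnder Khat 1 chiNeg4 a b c d :=
  transformsUnder_of_gamma0_four Khat_periodic Khat_div_four_mul_add_one chiNeg4_four_mul_add
    (by norm_num [chiNeg4]) (by norm_num [chiNeg4]) hdet hc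

lemma theta2_pow_four_transformsUnder {a b c d : ℤ} (hdet : a * d - b * c = 1) (hc : 4 ∣ c) :
    TransformsUnder (theta2 · ^ 4) 2 1 a b c d :=
  transformsUnder_of_gamma0_four theta2_pow_four_periodic theta2_pow_four_div_four_mul_add_one
    (fun _ _ => rfl) rfl (by norm_num) hdet hc

lemma KEhat_eq_logDeriv (τ : ℂ) : KEhat τ = logDeriv (theta2 · ^ 4) τ / (2 * π * I) := by
  rw [KEhat, dq, logDeriv_apply]
  ring

theorem KEhat_transform {a b c d : ℤ} (hdet : a * d - b * c = 1) (hc : 4 ∣ c) {τ : ℂ}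
    (hτ : 0 < τ.im) :
    KEhat (((a : ℂ) * τ + b) / ((c : ℂ) * τ + d)) =
      ((c : ℂ) * τ + d) ^ 2 * KEhat τ + (c : ℂ) * ((c : ℂ) * τ + d) / ((π : ℂ) * I) := by
  rw [KEhat_eq_logDeriv, KEhat_eq_logDeriv, (theta2_pow_four_transformsUnder hdet hc).logDeriv_eq
    hdet one_ne_zero hτ (pow_ne_zero 4 (theta2_ne_zero hτ)) ((differentiableAt_theta2 hτ).pow 4)
    ((differentiableAt_theta2 (im_int_moebius_pos hdet hτ)).pow 4)]
  have hπ : (π : ℂ) ≠ 0 := ofReal_ne_zero.mpr pi_ne_zero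
  field_simp
  push_cast
  ring

theorem elliptic_integrals_transformation_on_Gamma0_4
    (a b c d : ℤ) (hdet : a * d - b * c = 1) (hc : (4 : ℤ) ∣ c)
    (τ : ℂ) (hτ : 0 < τ.im) :
    Khat (((a : ℂ) * τ + b) / ((c : ℂ) * τ + d)) =
      chiNeg4 d * ((c : ℂ) * τ + d) * Khat τ ∧
    Ehat (((a : ℂ) * τ + b) / ((c : ℂ) * τ + d)) =
      chiNeg4 d * (((c : ℂ) * τ + d) * Ehat τ +
        (c : ℂ) / ((Real.pi : ℂ) * Complex.I * Khat τ)) ∧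
    KEhat (((a : ℂ) * τ + b) / ((c : ℂ) * τ + d)) =
      ((c : ℂ) * τ + d) ^ 2 * KEhat τ +
        (c : ℂ) * ((c : ℂ) * τ + d) / ((Real.pi : ℂ) * Complex.I) := by
  have hK : Khat (((a : ℂ) * τ + b) / ((c : ℂ) * τ + d)) =
      chiNeg4 d * ((c : ℂ) * τ + d) * Khat τ := by
    simpa using Khat_transformsUnder hdet hc τ hτ
  have hKE := KEhat_transform hdet hc hτ
  have hχ := chiNeg4_sq_of_odd (odd_of_mul_sub_mul_eq_one hdet (dvd_trans (by norm_num) hc))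
  have hD := int_mul_add_ne_zero hdet hτ
  have hK0 := Khat_ne_zero hτ
  have hχ0 : chiNeg4 d ≠ 0 := by rintro h; simp [h] at hχ
  have hπ : (π : ℂ) ≠ 0 := ofReal_ne_zero.mpr pi_ne_zero
  refine ⟨hK, ?_, hKE⟩
  rw [Ehat, Ehat, hKE, hK]
  field_simp
  linear_combination -((c * τ + d) * KEhat τ * π * I + c) * hχ
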